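/- Let μ' lie in the relative interior of the set of optimal solutions of the primal LP of the LAP P'. Define μ by μ_v(ℓ) = (μ'_v(ℓ) + μ'_ℓ(v))/2 for v ∈ V and ℓ ∈ L_v∖{#}, and μ_v(#) = μ'_v(v) for v ∈ V. Then μ lies in the relative interior of the set of optimal solutions of the primal LP formulation of the ILAP P. -/

import Mathlib

open Finset

/-! Incomplete LAP (ILAP): labels are `Option K`, the dummy label `#` is `none`.
The reduced complete LAP instance `P'` lives on `V ⊕ K` (both partitions equal
`V ∪ (L ∖ {#})`). -/

section IlapDefs

variable {V K : Type*} [Fintype V] [Fintype K] [DecidableEq V] [DecidableEq K]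

/-- Feasibility for the ILAP: allowed labels, and each non-dummy label used at most once. -/
def IlapFeasible (Lab : V → Finset (Option K)) (x : V → Option K) : Prop :=
  (∀ v, x v ∈ Lab v) ∧ ∀ u v k, x u = some k → x v = some k → u = v

/-- Cost of an ILAP assignment. -/
def ilapCost (θ : V → Option K → ℝ) (x : V → Option K) : ℝ := ∑ v, θ v (x v)

/-- Allowed labels of the reduced LAP instance `P'` on `V ⊕ K`:
`L'_v = (L_v ∖ {#}) ∪ {v}` and `L'_ℓ = V_ℓ ∪ {ℓ}`. -/
def redLab (Lab : V → Finset (Option K)) : V ⊕ K → Finset (V ⊕ K)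
  | Sum.inl v => insert (Sum.inl v) ((univ.filter fun k => some k ∈ Lab v).image Sum.inr)
  | Sum.inr k => insert (Sum.inr k) ((univ.filter fun v => some k ∈ Lab v).image Sum.inl)

/-- Costs of the reduced LAP instance `P'`: halved original costs between `V` and `L ∖ {#}`,
`θ_v(#)` on the vertex diagonal and `0` on the label diagonal. -/
noncomputable def redCost (θ : V → Option K → ℝ) : V ⊕ K → V ⊕ K → ℝ
  | Sum.inl v, Sum.inr k => θ v (some k) / 2
  | Sum.inr k, Sum.inl v => θ v (some k) / 2
  | Sum.inl v, Sum.inl _ => θ v none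
  | Sum.inr _, Sum.inr _ => 0

/-- Feasibility for the primal LP formulation of the ILAP. -/
def IlapPrimalFeasible (Lab : V → Finset (Option K)) (μ : V → Option K → ℝ) : Prop :=
  (∀ v ℓ, ℓ ∈ Lab v → 0 ≤ μ v ℓ) ∧
  (∀ v ℓ, ℓ ∉ Lab v → μ v ℓ = 0) ∧
  (∀ v, ∑ ℓ ∈ Lab v, μ v ℓ = 1) ∧
  (∀ k : K, ∑ v ∈ univ.filter (fun v => some k ∈ Lab v), μ v (some k) ≤ 1)

/-- Objective of the primal LP formulation of the ILAP. -/
def ilapPrimalObj (θ : V → Option K → ℝ) (Lab : V → Finset (Option K))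
    (μ : V → Option K → ℝ) : ℝ :=
  ∑ v, ∑ ℓ ∈ Lab v, θ v ℓ * μ v ℓ

/-- The set of optimal solutions of the primal LP formulation of the ILAP. -/
def IlapPrimalOpt (θ : V → Option K → ℝ) (Lab : V → Finset (Option K)) :
    Set (V → Option K → ℝ) :=
  {μ | IlapPrimalFeasible Lab μ ∧
    ∀ ν, IlapPrimalFeasible Lab ν → ilapPrimalObj θ Lab μ ≤ ilapPrimalObj θ Lab ν}

/-- Feasibility for the dual LP formulation of the ILAP: `β ≤ 0` and
`α_v + [ℓ ≠ #]·β_ℓ ≤ θ_v(ℓ)` on allowed pairs. -/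
def IlapDualFeasible (θ : V → Option K → ℝ) (Lab : V → Finset (Option K))
    (p : (V → ℝ) × (K → ℝ)) : Prop :=
  (∀ k, p.2 k ≤ 0) ∧
  ∀ v ℓ, ℓ ∈ Lab v →
    p.1 v + (match ℓ with | some k => p.2 k | none => 0) ≤ θ v ℓ

/-- Objective of the dual LP formulation of the ILAP. -/
def ilapDualObj (p : (V → ℝ) × (K → ℝ)) : ℝ := ∑ v, p.1 v + ∑ k, p.2 k

/-- The set of optimal solutions of the dual LP formulation of the ILAP. -/
def IlapDualOpt (θ : V → Option K → ℝ) (Lab : V → Finset (Option K)) :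
    Set ((V → ℝ) × (K → ℝ)) :=
  {p | IlapDualFeasible θ Lab p ∧
    ∀ q, IlapDualFeasible θ Lab q → ilapDualObj q ≤ ilapDualObj p}

end IlapDefs

section LAPDefs

variable {V L : Type*} [Fintype V] [Fintype L] [DecidableEq V] [DecidableEq L]

/-- Feasibility for the primal LP of a (complete) LAP. -/
def PrimalFeasible (Lab : V → Finset L) (μ : V → L → ℝ) : Prop :=
  (∀ v ℓ, ℓ ∈ Lab v → 0 ≤ μ v ℓ) ∧
  (∀ v ℓ, ℓ ∉ Lab v → μ v ℓ = 0) ∧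
  (∀ v, ∑ ℓ ∈ Lab v, μ v ℓ = 1) ∧
  (∀ ℓ : L, ∑ v ∈ univ.filter (fun v => ℓ ∈ Lab v), μ v ℓ = 1)

/-- Objective of the primal LP of a (complete) LAP. -/
def primalObj (θ : V → L → ℝ) (Lab : V → Finset L) (μ : V → L → ℝ) : ℝ :=
  ∑ v, ∑ ℓ ∈ Lab v, θ v ℓ * μ v ℓ

/-- The set of optimal solutions of the primal LP of a (complete) LAP. -/
def PrimalOpt (θ : V → L → ℝ) (Lab : V → Finset L) : Set (V → L → ℝ) :=
  {μ | PrimalFeasible Lab μ ∧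
    ∀ ν, PrimalFeasible Lab ν → primalObj θ Lab μ ≤ primalObj θ Lab ν}

/-- Feasibility for the dual LP of a (complete) LAP. -/
def DualFeasible (θ : V → L → ℝ) (Lab : V → Finset L) (p : (V → ℝ) × (L → ℝ)) : Prop :=
  ∀ v ℓ, ℓ ∈ Lab v → p.1 v + p.2 ℓ ≤ θ v ℓ

/-- Objective of the dual LP of a (complete) LAP. -/
def dualObj (p : (V → ℝ) × (L → ℝ)) : ℝ := ∑ v, p.1 v + ∑ ℓ, p.2 ℓ

/-- The set of optimal solutions of the dual LP of a (complete) LAP. -/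
def DualOpt (θ : V → L → ℝ) (Lab : V → Finset L) : Set ((V → ℝ) × (L → ℝ)) :=
  {p | DualFeasible θ Lab p ∧ ∀ q, DualFeasible θ Lab q → dualObj q ≤ dualObj p}

end LAPDefs

/-! The averaging map `μ' ↦ μ` is linear, preserves the objective and sends feasible points of
`P'` to feasible points of `P`. Conversely every feasible `μ` is the image of a feasible `μ'`:
copy `μ_v(ℓ)` into both off-diagonal entries and put `μ_v(#)`, resp. the slack
`1 - ∑_v μ_v(ℓ)` of label `ℓ`, on the diagonal. So the map sends the optimal face of `P'` onto
that of `P`. A linear map sends the relative interior of a convex set into the relative interior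
of its image, because in finite dimension `z` lies in the relative interior of a convex `C` iff
every segment from a point of `C` to `z` can be prolonged beyond `z` inside `C`. -/

section IntrinsicInterior

open Set Filter Topology AffineMap

section Topological

variable {E : Type*} [AddCommGroup E] [Module ℝ E] [TopologicalSpace E] {C : Set E}

lemma eventually_mem_of_mem_intrinsicInterior {X : Type*} [TopologicalSpace X] {f : X → E}
    (hf : Continuous f) (hf_mem : ∀ x, f x ∈ affineSpan ℝ C) {x₀ : X}
    (hx₀ : f x₀ ∈ intrinsicInterior ℝ C) : ∀ᶠ x in 𝓝 x₀, f x ∈ C := by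
  obtain ⟨y, hy, hyx⟩ := mem_intrinsicInterior.1 hx₀
  have hg : Continuous fun x => (⟨f x, hf_mem x⟩ : affineSpan ℝ C) := hf.subtype_mk hf_mem
  obtain rfl : y = ⟨f x₀, hf_mem x₀⟩ := Subtype.ext hyx
  exact hg.continuousAt.eventually (mem_interior_iff_mem_nhds.1 hy)

lemma exists_one_lt_lineMap_mem_of_mem_intrinsicInterior [IsTopologicalAddGroup E]
    [ContinuousSMul ℝ E] {x z : E} (hx : x ∈ C)
    (hz : z ∈ intrinsicInterior ℝ C) : ∃ t : ℝ, 1 < t ∧ lineMap x z t ∈ C := by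
  have hspan : ∀ t : ℝ, lineMap x z t ∈ affineSpan ℝ C := fun t =>
    lineMap_mem t (subset_affineSpan ℝ C hx) (subset_affineSpan ℝ C (intrinsicInterior_subset hz))
  have hev : ∀ᶠ t in 𝓝 (1 : ℝ), lineMap x z t ∈ C :=
    eventually_mem_of_mem_intrinsicInterior lineMap_continuous hspan (by simpa using hz)
  exact ((eventually_mem_nhdsWithin (s := Ioi 1)).and (hev.filter_mono nhdsWithin_le_nhds)).exists

lemma homothety_mem_intrinsicInterior [IsTopologicalAddGroup E] [ContinuousSMul ℝ E]
    (hC : Convex ℝ C) {x y : E} (hx : x ∈ C) (hy : y ∈ intrinsicInterior ℝ C) {t : ℝ}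
    (ht : t ∈ Set.Ioc 0 1) :
    homothety x t y ∈ intrinsicInterior ℝ C := by
  have hxA := subset_affineSpan ℝ C hx
  have hz : homothety x t y ∈ affineSpan ℝ C :=
    homothety_mem hxA t (subset_affineSpan ℝ C (intrinsicInterior_subset hy))
  refine mem_intrinsicInterior.2 ⟨⟨_, hz⟩, mem_interior_iff_mem_nhds.2 ?_, rfl⟩
  -- `homothety x t⁻¹` maps our point to `y`, so nearby points land in `C`; convexity pulls back.
  have hev : ∀ᶠ p : affineSpan ℝ C in 𝓝 ⟨_, hz⟩, homothety x t⁻¹ (p : E) ∈ C := by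
    refine eventually_mem_of_mem_intrinsicInterior (by fun_prop)
      (fun p => homothety_mem hxA _ p.2) ?_
    rwa [← homothety_mul_apply, inv_mul_cancel₀ ht.1.ne', homothety_one, id_apply]
  filter_upwards [hev] with p hp
  have := hC.lineMap_mem hx hp ⟨ht.1.le, ht.2⟩
  rwa [← homothety_eq_lineMap, ← homothety_mul_apply, mul_inv_cancel₀ ht.1.ne', homothety_one,
    id_apply] at this

end Topological

variable {E F : Type*} [NormedAddCommGroup E] [NormedSpace ℝ E] {C : Set E}

lemma mem_intrinsicInterior_of_forall_exists_lineMap_mem [FiniteDimensional ℝ E]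
    (hC : Convex ℝ C) {z : E} (hz : z ∈ C) (h : ∀ x ∈ C, ∃ t : ℝ, 1 < t ∧ lineMap x z t ∈ C) :
    z ∈ intrinsicInterior ℝ C := by
  obtain ⟨w, hw⟩ := Set.Nonempty.intrinsicInterior hC ⟨z, hz⟩
  obtain ⟨t, ht, hy⟩ := h w (intrinsicInterior_subset hw)
  have ht₀ : 0 < t := one_pos.trans ht
  convert homothety_mem_intrinsicInterior hC hy hw (t := 1 - t⁻¹)
    ⟨by simp [inv_lt_one_of_one_lt₀ ht], by simp [ht₀.le]⟩ using 1
  simp only [homothety_apply, lineMap_apply_module, vsub_eq_sub, vadd_eq_add]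
  match_scalars <;> field_simp <;> ring

lemma LinearMap.image_intrinsicInterior_subset [NormedAddCommGroup F] [NormedSpace ℝ F]
    [FiniteDimensional ℝ F] (f : E →ₗ[ℝ] F) (hC : Convex ℝ C) :
    f '' intrinsicInterior ℝ C ⊆ intrinsicInterior ℝ (f '' C) := by
  rintro _ ⟨z, hz, rfl⟩
  refine mem_intrinsicInterior_of_forall_exists_lineMap_mem (hC.linear_image f)
    (mem_image_of_mem f (intrinsicInterior_subset hz)) ?_
  rintro _ ⟨x, hx, rfl⟩
  obtain ⟨t, ht, hxt⟩ := exists_one_lt_lineMap_mem_of_mem_intrinsicInterior hx hz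
  exact ⟨t, ht, _, hxt, f.toAffineMap.apply_lineMap x z t⟩

end IntrinsicInterior

lemma ConvexOn.convex_setOf_isMinOn {E : Type*} [AddCommGroup E] [Module ℝ E] {S : Set E}
    {f : E → ℝ} (hf : ConvexOn ℝ S f) : Convex ℝ {x | x ∈ S ∧ ∀ y ∈ S, f x ≤ f y} := by
  rintro x ⟨hxS, hx⟩ y ⟨hyS, hy⟩ a b ha hb hab
  refine ⟨hf.1 hxS hyS ha hb hab, fun z hz => ?_⟩
  calc f (a • x + b • y) ≤ a • f x + b • f y := hf.2 hxS hyS ha hb hab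
    _ ≤ a • f z + b • f z := by gcongr; exacts [hx z hz, hy z hz]
    _ = f z := by rw [← add_smul, hab, one_smul]

section LAP

variable {V L : Type*} [Fintype V]

lemma primalObj_add_smul (θ : V → L → ℝ) (Lab : V → Finset L) (μ ν : V → L → ℝ) (a b : ℝ) :
    primalObj θ Lab (a • μ + b • ν) = a * primalObj θ Lab μ + b * primalObj θ Lab ν := by
  simp only [primalObj, Pi.add_apply, Pi.smul_apply, smul_eq_mul, mul_add, Finset.sum_add_distrib,
    Finset.mul_sum]
  congr 1 <;> refine Finset.sum_congr rfl fun _ _ => Finset.sum_congr rfl fun _ _ => by ring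

lemma convex_setOf_primalFeasible [DecidableEq L] (Lab : V → Finset L) :
    Convex ℝ {μ | PrimalFeasible Lab μ} := by
  rintro μ ⟨hμ₁, hμ₂, hμ₃, hμ₄⟩ ν ⟨hν₁, hν₂, hν₃, hν₄⟩ a b ha hb hab
  simp only [Set.mem_ofPred_eq, PrimalFeasible, Pi.add_apply, Pi.smul_apply, smul_eq_mul,
    Finset.sum_add_distrib, ← Finset.mul_sum]
  refine ⟨fun v ℓ h => ?_, fun v ℓ h => ?_, fun v => ?_, fun ℓ => ?_⟩
  · have := hμ₁ v ℓ h; have := hν₁ v ℓ h; positivity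
  · simp [hμ₂ v ℓ h, hν₂ v ℓ h]
  · simp [hμ₃ v, hν₃ v, hab]
  · simp [hμ₄ ℓ, hν₄ ℓ, hab]

lemma convex_primalOpt [DecidableEq L] (θ : V → L → ℝ) (Lab : V → Finset L) :
    Convex ℝ (PrimalOpt θ Lab) :=
  ConvexOn.convex_setOf_isMinOn (S := {μ | PrimalFeasible Lab μ})
    ⟨convex_setOf_primalFeasible Lab, fun μ _ ν _ a b _ _ _ => by
      rw [primalObj_add_smul, smul_eq_mul, smul_eq_mul]⟩

end LAP

section LapToIlap

variable {V K : Type*}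

variable (V K) in
noncomputable def lapToIlap : ((V ⊕ K) → (V ⊕ K) → ℝ) →ₗ[ℝ] (V → Option K → ℝ) where
  toFun μ' v
    | some k => (μ' (Sum.inl v) (Sum.inr k) + μ' (Sum.inr k) (Sum.inl v)) / 2
    | none => μ' (Sum.inl v) (Sum.inl v)
  map_add' μ ν := by
    ext v (_ | k)
    · rfl
    · simp only [Pi.add_apply]; ring
  map_smul' c μ := by
    ext v (_ | k)
    · rfl
    · simp only [Pi.smul_apply, smul_eq_mul, RingHom.id_apply]; ring

@[simp] lemma lapToIlap_none (μ' : (V ⊕ K) → (V ⊕ K) → ℝ) (v : V) :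
    lapToIlap V K μ' v none = μ' (Sum.inl v) (Sum.inl v) := rfl

@[simp] lemma lapToIlap_some (μ' : (V ⊕ K) → (V ⊕ K) → ℝ) (v : V) (k : K) :
    lapToIlap V K μ' v (some k) = (μ' (Sum.inl v) (Sum.inr k) + μ' (Sum.inr k) (Sum.inl v)) / 2 :=
  rfl

end LapToIlap

section Reduction

open Finset

variable {V K : Type*} [Fintype V] [Fintype K] [DecidableEq V] [DecidableEq K]
  {Lab : V → Finset (Option K)}

@[simp] lemma inl_mem_redLab_inl {v w : V} : Sum.inl w ∈ redLab Lab (Sum.inl v) ↔ w = v := by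
  simp [redLab]

@[simp] lemma inr_mem_redLab_inl {v : V} {k : K} :
    Sum.inr k ∈ redLab Lab (Sum.inl v) ↔ some k ∈ Lab v := by
  simp [redLab]

@[simp] lemma inl_mem_redLab_inr {k : K} {v : V} :
    Sum.inl v ∈ redLab Lab (Sum.inr k) ↔ some k ∈ Lab v := by
  simp [redLab]

@[simp] lemma inr_mem_redLab_inr {k k' : K} : Sum.inr k' ∈ redLab Lab (Sum.inr k) ↔ k' = k := by
  simp [redLab]

lemma mem_redLab_comm {a b : V ⊕ K} : a ∈ redLab Lab b ↔ b ∈ redLab Lab a := by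
  rcases a with a | a <;> rcases b with b | b <;> simp [eq_comm]

lemma filter_mem_redLab (a : V ⊕ K) : univ.filter (fun b => a ∈ redLab Lab b) = redLab Lab a := by
  ext b; simp [mem_redLab_comm]

lemma sum_redLab_inl (v : V) (f : V ⊕ K → ℝ) :
    ∑ a ∈ redLab Lab (Sum.inl v), f a
      = f (Sum.inl v) + ∑ k ∈ univ.filter (fun k => some k ∈ Lab v), f (Sum.inr k) := by
  rw [redLab, sum_insert (by simp), sum_image Sum.inr_injective.injOn]

lemma sum_redLab_inr (k : K) (f : V ⊕ K → ℝ) :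
    ∑ a ∈ redLab Lab (Sum.inr k), f a
      = f (Sum.inr k) + ∑ v ∈ univ.filter (fun v => some k ∈ Lab v), f (Sum.inl v) := by
  rw [redLab, sum_insert (by simp), sum_image Sum.inl_injective.injOn]

omit [Fintype V] [DecidableEq V] in
lemma sum_option_of_none_mem {s : Finset (Option K)} (hs : none ∈ s) (f : Option K → ℝ) :
    ∑ ℓ ∈ s, f ℓ = f none + ∑ k ∈ univ.filter (fun k => some k ∈ s), f (some k) := by
  have : s = insert none ((univ.filter fun k => some k ∈ s).image some) := by
    ext (_ | k) <;> simp [hs]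
  conv_lhs => rw [this]
  rw [sum_insert (by simp), sum_image (Option.some_injective K).injOn]

variable (Lab) in
noncomputable def ilapToLap (μ : V → Option K → ℝ) : (V ⊕ K) → (V ⊕ K) → ℝ
  | Sum.inl v, Sum.inr k => μ v (some k)
  | Sum.inr k, Sum.inl v => μ v (some k)
  | Sum.inl v, Sum.inl w => if w = v then μ v none else 0
  | Sum.inr k, Sum.inr k' =>
      if k' = k then 1 - ∑ v ∈ univ.filter (fun v => some k ∈ Lab v), μ v (some k) else 0

omit [Fintype K] in
lemma ilapToLap_comm (μ : V → Option K → ℝ) (a b : V ⊕ K) :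
    ilapToLap Lab μ a b = ilapToLap Lab μ b a := by
  rcases a with a | a <;> rcases b with b | b <;> simp only [ilapToLap] <;> split_ifs <;> simp_all

omit [Fintype K] in
lemma lapToIlap_ilapToLap (μ : V → Option K → ℝ) : lapToIlap V K (ilapToLap Lab μ) = μ := by
  ext v (_ | k) <;> simp [ilapToLap]

lemma ilapPrimalObj_lapToIlap (θ : V → Option K → ℝ) (hdum : ∀ v, none ∈ Lab v)
    (μ' : (V ⊕ K) → (V ⊕ K) → ℝ) :
    ilapPrimalObj θ Lab (lapToIlap V K μ') = primalObj (redCost θ) (redLab Lab) μ' := by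
  have hswap : ∑ k, ∑ v ∈ univ.filter (fun v => some k ∈ Lab v),
        θ v (some k) / 2 * μ' (Sum.inr k) (Sum.inl v)
      = ∑ v, ∑ k ∈ univ.filter (fun k => some k ∈ Lab v),
        θ v (some k) / 2 * μ' (Sum.inr k) (Sum.inl v) :=
    sum_comm' fun _ _ => by simp
  simp only [ilapPrimalObj, primalObj, Fintype.sum_sum_type, sum_redLab_inl, sum_redLab_inr,
    sum_option_of_none_mem (hdum _), redCost, zero_mul, zero_add, hswap, ← sum_add_distrib,
    lapToIlap_none, lapToIlap_some]
  refine sum_congr rfl fun v _ => ?_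
  rw [add_assoc, ← sum_add_distrib]
  congr 1
  exact sum_congr rfl fun k _ => by ring

lemma ilapPrimalFeasible_lapToIlap (hdum : ∀ v, none ∈ Lab v) {μ' : (V ⊕ K) → (V ⊕ K) → ℝ}
    (h : PrimalFeasible (redLab Lab) μ') : IlapPrimalFeasible Lab (lapToIlap V K μ') := by
  obtain ⟨hnonneg, hzero, hrow, hcol⟩ := h
  simp only [filter_mem_redLab] at hcol
  refine ⟨?_, ?_, fun v => ?_, fun k => ?_⟩
  · rintro v (_ | k) h
    · exact hnonneg _ _ (by simp)
    · have := hnonneg (Sum.inl v) (Sum.inr k) (by simpa using h)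
      have := hnonneg (Sum.inr k) (Sum.inl v) (by simpa using h)
      rw [lapToIlap_some]; positivity
  · rintro v (_ | k) h
    · exact absurd (hdum v) h
    · rw [lapToIlap_some, hzero (Sum.inl v) (Sum.inr k) (by simpa using h),
        hzero (Sum.inr k) (Sum.inl v) (by simpa using h)]
      norm_num
  -- average the row and the column constraint of `P'` at `inl v`, resp. at `inr k`
  · have hr := hrow (Sum.inl v)
    have hc := hcol (Sum.inl v)
    rw [sum_redLab_inl] at hr hc
    simp only [sum_option_of_none_mem (hdum v), lapToIlap_none, lapToIlap_some, ← sum_div,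
      sum_add_distrib]
    linarith
  · have hr := hrow (Sum.inr k)
    have hc := hcol (Sum.inr k)
    have := hnonneg (Sum.inr k) (Sum.inr k) (by simp)
    rw [sum_redLab_inr] at hr hc
    simp only [lapToIlap_some, ← sum_div, sum_add_distrib]
    linarith

lemma primalFeasible_ilapToLap (hdum : ∀ v, none ∈ Lab v) {μ : V → Option K → ℝ}
    (h : IlapPrimalFeasible Lab μ) : PrimalFeasible (redLab Lab) (ilapToLap Lab μ) := by
  obtain ⟨hnonneg, hzero, hrow, hcap⟩ := h
  have hrow' : ∀ a, ∑ b ∈ redLab Lab a, ilapToLap Lab μ a b = 1 := by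
    rintro (v | k)
    · rw [sum_redLab_inl, ← hrow v, sum_option_of_none_mem (hdum v)]
      simp [ilapToLap]
    · rw [sum_redLab_inr]
      simp [ilapToLap]
  refine ⟨?_, ?_, hrow', fun a => ?_⟩
  · rintro (v | k) (w | k') h <;> simp only [inl_mem_redLab_inl, inr_mem_redLab_inl,
      inl_mem_redLab_inr, inr_mem_redLab_inr] at h
    · subst h; simpa [ilapToLap] using hnonneg w none (hdum w)
    · exact hnonneg v (some k') h
    · exact hnonneg w (some k) h
    · subst h; simpa [ilapToLap] using hcap k'
  · rintro (v | k) (w | k') h <;> simp only [inl_mem_redLab_inl, inr_mem_redLab_inl,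
      inl_mem_redLab_inr, inr_mem_redLab_inr] at h
    · simp [ilapToLap, h]
    · exact hzero v (some k') h
    · exact hzero w (some k) h
    · simp [ilapToLap, h]
  · rw [filter_mem_redLab, ← hrow' a]
    exact sum_congr rfl fun b _ => ilapToLap_comm μ b a

lemma lapToIlap_image_primalOpt (θ : V → Option K → ℝ) (hdum : ∀ v, none ∈ Lab v) :
    lapToIlap V K '' PrimalOpt (redCost θ) (redLab Lab) = IlapPrimalOpt θ Lab := by
  ext μ
  constructor
  · rintro ⟨μ', ⟨hfeas, hopt⟩, rfl⟩
    refine ⟨ilapPrimalFeasible_lapToIlap hdum hfeas, fun ν hν => ?_⟩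
    rw [ilapPrimalObj_lapToIlap θ hdum, ← lapToIlap_ilapToLap (Lab := Lab) ν,
      ilapPrimalObj_lapToIlap θ hdum]
    exact hopt _ (primalFeasible_ilapToLap hdum hν)
  · rintro ⟨hfeas, hopt⟩
    refine ⟨ilapToLap Lab μ, ⟨primalFeasible_ilapToLap hdum hfeas, fun ν' hν' => ?_⟩,
      lapToIlap_ilapToLap μ⟩
    rw [← ilapPrimalObj_lapToIlap θ hdum, ← ilapPrimalObj_lapToIlap θ hdum, lapToIlap_ilapToLap]
    exact hopt _ (ilapPrimalFeasible_lapToIlap hdum hν')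

end Reduction

/-- Theorem 5(e): the map (20) sends a point of the relative interior of the primal
optimal set of the reduced LAP `P'` to a point of the relative interior of the optimal set
of the primal LP formulation of the ILAP `P`. -/
theorem statement17 {V K : Type*} [Fintype V] [Fintype K] [DecidableEq V] [DecidableEq K]
    (Lab : V → Finset (Option K)) (hdum : ∀ v, (none : Option K) ∈ Lab v)
    (θ : V → Option K → ℝ)
    (μ' : (V ⊕ K) → (V ⊕ K) → ℝ)
    (hμ' : μ' ∈ intrinsicInterior ℝ (PrimalOpt (redCost θ) (redLab Lab)))
    (μ : V → Option K → ℝ)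
    (hμ : μ = fun v ℓ => match ℓ with
      | some k => (μ' (Sum.inl v) (Sum.inr k) + μ' (Sum.inr k) (Sum.inl v)) / 2
      | none => μ' (Sum.inl v) (Sum.inl v)) :
    μ ∈ intrinsicInterior ℝ (IlapPrimalOpt θ Lab) := by
  obtain rfl : μ = lapToIlap V K μ' := by
    rw [hμ]; ext v (_ | k) <;> rfl
  rw [← lapToIlap_image_primalOpt θ hdum]
  exact (lapToIlap V K).image_intrinsicInterior_subset (convex_primalOpt _ _) ⟨μ', hμ', rfl⟩
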